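/- Let B be a unital C*-algebra, X a Hilbert C*-module over B, n ≥ 1, and x_1,…,x_n ∈ X. Then ∑_{k=1}^n ⟨x_k,x_k⟩ is invertible in B if and only if there exist y_1,…,y_n ∈ X such that ∑_{k=1}^n ⟨y_k,x_k⟩ = 1. -/

import Mathlib

/-!
If `S = ∑ ⟪xₖ, xₖ⟫` is invertible, `yₖ = xₖ (S⁻¹)⋆` does it. Conversely, in the Hilbert module `Xⁿ`
the hypothesis says `⟪y, x⟫ = 1`, so the C⋆-valued Cauchy–Schwarz inequality gives
`1 = ⟪x, y⟫ ⟪y, x⟫ ≤ ‖y‖² ⟪x, x⟫ = ‖y‖² S`: `S` dominates a positive multiple of `1`, hence is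
invertible. Mathlib's Hilbert modules are left modules, so `X` is first made into one by flipping
the inner product.
-/

open scoped InnerProductSpace RightActions

/-- The December 2024 Mathlib `CStarModule`: a right `A`-module (via `SMul Aᵐᵒᵖ E`) with an
`A`-valued inner product. Mathlib's current `CStarModule` is a left module instead. -/
class RightCStarModule (A E : Type*) [NonUnitalSemiring A] [StarRing A]
    [Module ℂ A] [AddCommGroup E] [Module ℂ E] [PartialOrder A] [SMul Aᵐᵒᵖ E] [Norm A] [Norm E]
    extends Inner A E where
  inner_add_right {x} {y} {z} : inner x (y + z) = inner x y + inner x z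
  inner_self_nonneg {x} : 0 ≤ inner x x
  inner_self {x} : inner x x = 0 ↔ x = 0
  inner_op_smul_right {a : A} {x y : E} : inner x (MulOpposite.op a • y) = inner x y * a
  inner_smul_right_complex {z : ℂ} {x} {y} : inner x (z • y) = z • inner x y
  star_inner x y : star (inner x y) = inner y x
  norm_eq_sqrt_norm_inner_self x : ‖x‖ = √‖inner x x‖

namespace RightCStarModule

variable {B X : Type*} [CStarAlgebra B] [PartialOrder B] [AddCommGroup X] [Module ℂ X]
  [SMul Bᵐᵒᵖ X] [Norm X] [RightCStarModule B X]

lemma inner_add_left (x y z : X) : inner B (x + y) z = inner B x z + inner B y z := by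
  rw [← star_inner z, inner_add_right, star_add, star_inner, star_inner]

lemma inner_op_smul_left (a : B) (x y : X) :
    inner B (x <• a) y = star a * inner B x y := by
  rw [← star_inner y, inner_op_smul_right, star_mul, star_inner]

lemma inner_smul_left_complex (z : ℂ) (x y : X) : inner B (z • x) y = star z • inner B x y := by
  rw [← star_inner y, inner_smul_right_complex, star_smul, star_inner]

end RightCStarModule

set_option linter.unusedVariables false in
/-- A right Hilbert `B`-module `X` seen as a left one: `a • x := x <• star a`, `⟪x, y⟫' := ⟪y, x⟫`,
and complex scalars act through complex conjugation so that `⟪·, ·⟫'` stays linear on the right. -/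
def RightCStarModule.Flip (B X : Type*) : Type _ := X

namespace RightCStarModule.Flip

variable {B X : Type*}

instance [h : NormedAddCommGroup X] : NormedAddCommGroup (Flip B X) := h

noncomputable instance [NormedAddCommGroup X] [Module ℂ X] : Module ℂ (Flip B X) :=
  Module.compHom X (starRingEnd ℂ)

instance [Star B] [SMul Bᵐᵒᵖ X] : SMul B (Flip B X) :=
  ⟨fun a (x : X) => x <• star a⟩

noncomputable instance [CStarAlgebra B] [PartialOrder B] [NormedAddCommGroup X] [Module ℂ X]
    [SMul Bᵐᵒᵖ X] [RightCStarModule B X] : CStarModule B (Flip B X) where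
  inner := fun (x y : X) => inner B y x
  inner_add_right {x y z} := inner_add_left (X := X) y z x
  inner_self_nonneg := inner_self_nonneg (A := B) (E := X)
  inner_self := inner_self (A := B) (E := X)
  inner_op_smul_right {a x y} :=
    (inner_op_smul_left (X := X) (star a) y x).trans (by rw [star_star])
  inner_smul_right_complex {z x y} :=
    (inner_smul_left_complex (X := X) (starRingEnd ℂ z) y x).trans
      (by rw [starRingEnd_apply, star_star])
  star_inner x y := star_inner (A := B) (E := X) y x
  norm_eq_sqrt_norm_inner_self := norm_eq_sqrt_norm_inner_self (A := B) (E := X)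

end RightCStarModule.Flip

lemma CStarAlgebra.isUnit_of_one_le_smul {A : Type*} [CStarAlgebra A] [PartialOrder A]
    [StarOrderedRing A] {a : A} {c : ℝ} (hc : c ≠ 0) (h : 1 ≤ c • a) : IsUnit a :=
  (isUnit_smul_iff (Units.mk0 c hc) a).1 (isUnit_of_le 1 h)

namespace CStarModule

variable {A E : Type*} [CStarAlgebra A] [PartialOrder A] [StarOrderedRing A] [AddCommGroup E]
  [Module ℂ E] [SMul A E] [Norm E] [CStarModule A E]

lemma isUnit_inner_self_of_inner_eq_one {x y : E} (h : ⟪x, y⟫_A = 1) : IsUnit ⟪x, x⟫_A := by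
  have hyx : ⟪y, x⟫_A = 1 := by rw [← star_inner, h, star_one]
  refine CStarAlgebra.isUnit_of_one_le_smul (c := ‖y‖ ^ 2 + 1) (by positivity) ?_
  calc (1 : A) = ⟪y, x⟫_A * ⟪x, y⟫_A := by rw [h, hyx, one_mul]
    _ ≤ ‖y‖ ^ 2 • ⟪x, x⟫_A := inner_mul_inner_swap_le
    _ ≤ (‖y‖ ^ 2 + 1) • ⟪x, x⟫_A := by
      gcongr
      · exact inner_self_nonneg
      · linarith

end CStarModule

theorem isUnit_sum_inner_self_iff_exists_sum_inner_eq_one_general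
    {B X : Type*} [CStarAlgebra B] [PartialOrder B] [StarOrderedRing B]
    [NormedAddCommGroup X] [Module ℂ X] [SMul Bᵐᵒᵖ X] [RightCStarModule B X]
    (n : ℕ) (x : Fin n → X) :
    IsUnit (∑ k, (inner B (x k) (x k) : B)) ↔
      ∃ y : Fin n → X, ∑ k, (inner B (y k) (x k) : B) = 1 := by
  constructor
  · rintro ⟨u, hu⟩
    refine ⟨fun k => x k <• star (↑u⁻¹ : B), ?_⟩
    simp_rw [RightCStarModule.inner_op_smul_left, star_star, ← Finset.mul_sum, ← hu,
      Units.inv_mul]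
  · rintro ⟨y, hy⟩
    -- In `C⋆ᵐᵒᵈ(B, Fin n → Flip B X)`, `hy` and the goal are `⟪x, y⟫ = 1` and `IsUnit ⟪x, x⟫`.
    let toPi := (WithCStarModule.equiv B (Fin n → RightCStarModule.Flip B X)).symm
    exact CStarModule.isUnit_inner_self_of_inner_eq_one (A := B) (x := toPi x) (y := toPi y) hy

/-- Let `B` be a unital C⋆-algebra, `X` a Hilbert C⋆-module over `B`,
`n ≥ 1`, and `x₁, …, xₙ ∈ X`. Then `∑ₖ ⟪xₖ, xₖ⟫` is invertible in `B` if and only if there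
exist `y₁, …, yₙ ∈ X` such that `∑ₖ ⟪yₖ, xₖ⟫ = 1`. -/
theorem isUnit_sum_inner_self_iff_exists_sum_inner_eq_one
    {B X : Type*} [CStarAlgebra B] [PartialOrder B] [StarOrderedRing B]
    [NormedAddCommGroup X] [Module ℂ X] [SMul Bᵐᵒᵖ X] [RightCStarModule B X] [CompleteSpace X]
    (n : ℕ) (hn : 1 ≤ n) (x : Fin n → X) :
    IsUnit (∑ k, (inner B (x k) (x k) : B)) ↔
      ∃ y : Fin n → X, ∑ k, (inner B (y k) (x k) : B) = 1 :=
  isUnit_sum_inner_self_iff_exists_sum_inner_eq_one_general n x
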